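/- arXiv:1610.04048 — 2 statements merged into one kernel-verified Lean document; each statement's English description precedes it below -/
import Mathlib

section
/- For every integer s ≥ 0 and every g ∈ 𝕂_s there exists f ∈ 𝕂_s with θ·f + τ(f) = g; that is, the Carlitz operator C_θ : 𝕂_s → 𝕂_s is surjective (the Carlitz module C(𝕂_s) is θ-divisible). -/
noncomputable section

/-- 𝔽_q^{ac} : an algebraic closure of the prime field -/
abbrev Fac (p : ℕ) [Fact p.Prime] : Type := AlgebraicClosure (ZMod p)

/-- L_s = 𝔽_q^{ac}(t₁,…,t_s) -/
abbrev Ls (p : ℕ) [Fact p.Prime] (s : ℕ) : Type :=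
  FractionRing (MvPolynomial (Fin s) (Fac p))

/-- 𝕂_s = Hahn series with exponents in ℚ and coefficients in L_s -/
abbrev Ks (p : ℕ) [Fact p.Prime] (s : ℕ) : Type := HahnSeries ℚ (Ls p s)

/-- φ : the automorphism of L_s fixing t₁,…,t_s and acting as the p-power Frobenius
on 𝔽_q^{ac} -/
def phi (p : ℕ) [Fact p.Prime] (s : ℕ) : Ls p s ≃+* Ls p s :=
  IsFractionRing.ringEquivOfRingEquiv
    (MvPolynomial.mapEquiv (Fin s) (frobeniusEquiv (Fac p) p))

/-- coefficientwise action of a ring morphism on Hahn series -/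
def coeffRingHom {Γ R S : Type*} [AddCommMonoid Γ] [PartialOrder Γ] [IsOrderedCancelAddMonoid Γ] [Semiring R]
    [Semiring S] (f : R →+* S) : HahnSeries Γ R →+* HahnSeries Γ S where
  toFun x := x.map f
  map_one' := HahnSeries.map_one f.toMonoidWithZeroHom
  map_mul' _ _ := HahnSeries.map_mul (f : R →ₙ+* S)
  map_zero' := HahnSeries.map_zero f.toZeroHom
  map_add' _ _ := HahnSeries.map_add f.toAddMonoidHom

/-- rescaling of the exponents of a Hahn series by a positive constant -/
def scaleHom {R : Type*} [Semiring R] (c : ℚ) (hc : 0 < c) :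
    HahnSeries ℚ R →+* HahnSeries ℚ R :=
  HahnSeries.embDomainRingHom (AddMonoidHom.mulLeft c)
    (fun a b hab => mul_left_cancel₀ hc.ne' hab)
    (fun a b => by
      simpa [AddMonoidHom.mulLeft] using
        mul_le_mul_iff_of_pos_left (a := c) (b := a) (c := b) hc)

lemma scale_coeff {R : Type*} [Semiring R] (c : ℚ) (hc : 0 < c) (x : HahnSeries ℚ R) (g : ℚ) :
    (scaleHom c hc x).coeff (c * g) = x.coeff g :=
  HahnSeries.embDomain_mk_coeff _ _

lemma coeffRingHom_coeff {Γ R S : Type*} [AddCommMonoid Γ] [PartialOrder Γ] [IsOrderedCancelAddMonoid Γ] [Semiring R]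
    [Semiring S] (f : R →+* S) (x : HahnSeries Γ R) (g : Γ) :
    (coeffRingHom f x).coeff g = f (x.coeff g) := rfl

/-- μ : the automorphism of 𝕂_s sending ∑ cᵢ θ^{-i} to ∑ φ(cᵢ) θ^{-p·i} -/
def mu (p : ℕ) [Fact p.Prime] (s : ℕ) : Ks p s ≃+* Ks p s :=
  have hp : (0:ℚ) < (p:ℚ) := by exact_mod_cast (Fact.out : p.Prime).pos
  have hp' : (0:ℚ) < (p:ℚ)⁻¹ := by positivity
  RingEquiv.ofRingHom
    ((scaleHom (p:ℚ) hp).comp (coeffRingHom (phi p s).toRingHom))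
    ((coeffRingHom (phi p s).symm.toRingHom).comp (scaleHom (p:ℚ)⁻¹ hp'))
    (by
      ext x g
      have h : g = (p:ℚ) * ((p:ℚ)⁻¹ * g) := by field_simp
      show ((scaleHom (p:ℚ) hp) ((coeffRingHom (phi p s).toRingHom)
        ((coeffRingHom (phi p s).symm.toRingHom)
          ((scaleHom (p:ℚ)⁻¹ hp') x)))).coeff g = x.coeff g
      nth_rewrite 1 [h]
      rw [scale_coeff, coeffRingHom_coeff, coeffRingHom_coeff, scale_coeff]
      simp)
    (by
      ext x g
      have h : g = (p:ℚ)⁻¹ * ((p:ℚ) * g) := by field_simp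
      show ((coeffRingHom (phi p s).symm.toRingHom)
        ((scaleHom (p:ℚ)⁻¹ hp') ((scaleHom (p:ℚ) hp)
          ((coeffRingHom (phi p s).toRingHom) x)))).coeff g = x.coeff g
      rw [coeffRingHom_coeff]
      nth_rewrite 1 [h]
      rw [scale_coeff, scale_coeff, coeffRingHom_coeff]
      simp)

/-- τ = μ^e -/
def tau (p : ℕ) [Fact p.Prime] (e s : ℕ) : Ks p s ≃+* Ks p s := (mu p s) ^ e

/-- 𝔽_q as a subfield of 𝔽_q^{ac} (q = p^e) : the fixed points of x ↦ x^(p^e) -/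
def Fq (p : ℕ) [Fact p.Prime] (e : ℕ) : Subfield (Fac p) :=
  (iterateFrobenius (Fac p) p e).eqLocusField (RingHom.id _)

/-- t_i as an element of L_s -/
def tVar (p : ℕ) [Fact p.Prime] (s : ℕ) (i : Fin s) : Ls p s :=
  algebraMap (MvPolynomial (Fin s) (Fac p)) (Ls p s) (MvPolynomial.X i)

/-- the inclusion 𝔽_q^{ac} → L_s -/
def iota (p : ℕ) [Fact p.Prime] (s : ℕ) : Fac p →+* Ls p s :=
  (algebraMap (MvPolynomial (Fin s) (Fac p)) (Ls p s)).comp MvPolynomial.C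

/-- θ ∈ 𝕂_s : the Hahn series with single term of exponent -1 and coefficient 1 -/
def theta (p : ℕ) [Fact p.Prime] (s : ℕ) : Ks p s := HahnSeries.single (-1 : ℚ) 1

/-- the inclusion of L_s in 𝕂_s as constant Hahn series -/
def cK (p : ℕ) [Fact p.Prime] (s : ℕ) : Ls p s →+* Ks p s := HahnSeries.C

open scoped Classical in
/-- the sum of a family of Hahn series, when the family is summable
(junk value 0 otherwise) -/
def hahnSum {Γ R α : Type*} [PartialOrder Γ] [AddCommMonoid R]
    (f : α → HahnSeries Γ R) : HahnSeries Γ R :=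
  if h : ∃ S : HahnSeries.SummableFamily Γ R α, ⇑S = f then h.choose.hsum else 0

/-- evaluation at θ of a polynomial of A = 𝔽_q[θ], giving an element of 𝕂_s -/
def AtoK (p : ℕ) [Fact p.Prime] (e s : ℕ) : Polynomial (Fq p e) →+* Ks p s :=
  Polynomial.eval₂RingHom
    ((cK p s).comp ((iota p s).comp (Fq p e).subtype)) (theta p s)

/-- d_n ∈ 𝕂_s : the product of all monic polynomials of degree n of A -/
def dK (p : ℕ) [Fact p.Prime] (e s : ℕ) (n : ℕ) : Ks p s :=
  ∏ᶠ (a : Polynomial (Fq p e)) (_ : a.Monic ∧ a.natDegree = n), AtoK p e s a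

/-- the Carlitz exponential exp_C : 𝕂_s → 𝕂_s, exp_C(f) = ∑_{i≥0} d_i⁻¹ τ^i(f) -/
def expC (p : ℕ) [Fact p.Prime] (e s : ℕ) (f : Ks p s) : Ks p s :=
  hahnSum fun i : ℕ => (dK p e s i)⁻¹ * ((tau p e s) ^ i) f

/-- the subfield 𝔽_p(t₁,…,t_s) of 𝕂_s -/
def FpT (p : ℕ) [Fact p.Prime] (s : ℕ) : Subfield (Ks p s) :=
  Subfield.closure (Set.range fun i => cK p s (tVar p s i))

/-- the subfield 𝔽_q(t₁,…,t_s) of 𝕂_s -/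
def FqT (p : ℕ) [Fact p.Prime] (e s : ℕ) : Subfield (Ks p s) :=
  Subfield.closure
    (((cK p s).comp (iota p s)) '' (Fq p e) ∪ Set.range fun i => cK p s (tVar p s i))

/-- the subfield 𝔽_q(θ,t₁,…,t_s) of 𝕂_s -/
def FqThetaT (p : ℕ) [Fact p.Prime] (e s : ℕ) : Subfield (Ks p s) :=
  Subfield.closure
    (((cK p s).comp (iota p s)) '' (Fq p e) ∪ (Set.range fun i => cK p s (tVar p s i))
      ∪ {theta p s})

/-- the subring 𝔽_q(t₁,…,t_s)[θ] of 𝕂_s -/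
def polyA (p : ℕ) [Fact p.Prime] (e s : ℕ) : Subring (Ks p s) :=
  Subring.closure ((FqT p e s : Set (Ks p s)) ∪ {theta p s})

/-- the subring 𝔽_q[t₁,…,t_s,θ] of 𝕂_s -/
def polyFqT (p : ℕ) [Fact p.Prime] (e s : ℕ) : Subring (Ks p s) :=
  Subring.closure
    (((cK p s).comp (iota p s)) '' (Fq p e) ∪ (Set.range fun i => cK p s (tVar p s i))
      ∪ {theta p s})

/-- the zeta value ζ_A(n; r) ∈ 𝕂_s, for r ≤ s -/
def zetaA (p : ℕ) [Fact p.Prime] (e s : ℕ) (n r : ℕ) (h : r ≤ s) : Ks p s :=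
  hahnSum fun a : {a : Polynomial (Fq p e) // a.Monic} =>
    cK p s (∏ i : Fin r,
      Polynomial.eval₂ ((iota p s).comp (Fq p e).subtype) (tVar p s (Fin.castLE h i)) a.1)
      * (AtoK p e s a.1) ^ (-(n : ℤ))

/-- the Carlitz operator C_θ -/
def Ctheta (p : ℕ) [Fact p.Prime] (e s : ℕ) (f : Ks p s) : Ks p s :=
  theta p s * f + tau p e s f

/-- C_a for a ∈ 𝔽_q(t₁,…,t_s)[θ], given as a polynomial in θ with coefficients in
𝔽_q(t₁,…,t_s) : C_a(f) = ∑_j a_j C_θ^{∘j}(f) -/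
def Cpoly (p : ℕ) [Fact p.Prime] (e s : ℕ) (a : Polynomial (FqT p e s)) (f : Ks p s) : Ks p s :=
  a.sum fun j c => (c : Ks p s) * (Ctheta p e s)^[j] f

/-- the element of 𝕂_s defined by a polynomial a ∈ 𝔽_q(t₁,…,t_s)[θ] -/
def evalA (p : ℕ) [Fact p.Prime] (e s : ℕ) (a : Polynomial (FqT p e s)) : Ks p s :=
  Polynomial.eval₂ (FqT p e s).subtype (theta p s) a

/-! Let q = p^e. An element ξ with τ(ξ) = -θξ (ξ = ζθ^{1/(q-1)} with ζ^{q-1} = -1, i.e.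
ξ^{q-1} = -θ) turns θf + τf = g, for f = ξh, into h - τh = (θξ)⁻¹g; so it suffices that
1 - τ is onto. On Hahn series τ multiplies exponents by q and acts by φ^e on coefficients.
The part of g with positive exponents is solved by the Neumann series ∑ τⁿg, the part with
negative exponents by -∑ τ^{-n-1}g: in both cases the sets q^{±n}·supp g move upwards and
only finitely many of them reach below any given exponent, so the sums are Hahn series.
The constant term needs x - φ^e x = c in L_s, an additive Hilbert 90: c is fixed by some
power φ^{en}, so its trace over pn steps vanishes in characteristic p, and an element of
𝔽_p^{ac} of trace 1 produces a solution. -/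

open Function Finset

theorem Set.isWF_iUnion_of_finite_le {α ι : Type*} [LinearOrder α] {t : ι → Set α}
    (ht : ∀ i, (t i).IsWF) (hfin : ∀ a ∈ ⋃ i, t i, {i | ∃ x ∈ t i, x ≤ a}.Finite) :
    (⋃ i, t i).IsWF := by
  rw [Set.isWF_iff_no_descending_seq]
  intro u hu hmem
  set I := (hfin (u 0) (hmem 0)).toFinset
  have hwf : (⋃ i ∈ I, t i).IsWF := (Finset.isWF_bUnion I).mpr fun i _ => ht i
  refine Set.isWF_iff_no_descending_seq.mp hwf u hu fun k => ?_
  obtain ⟨i, hi⟩ := Set.mem_iUnion.mp (hmem k)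
  exact Set.mem_biUnion (by simpa [I] using ⟨u k, hi, hu.antitone (Nat.zero_le k)⟩) hi

theorem Set.IsWF.finite_pow_mul_le_of_pos {S : Set ℚ} (hS : S.IsWF) (hpos : ∀ s ∈ S, 0 < s)
    {Q : ℚ} (hQ : 1 < Q) (a : ℚ) : {n : ℕ | ∃ s ∈ S, Q ^ n * s ≤ a}.Finite := by
  rcases S.eq_empty_or_nonempty with rfl | hne
  · simp
  set m := hS.min hne
  have hm : 0 < m := hpos _ (hS.min_mem hne)
  have hlarge : ∀ᶠ n in Filter.cofinite, a / m < Q ^ n := by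
    rw [Nat.cofinite_eq_atTop]
    exact (tendsto_pow_atTop_atTop_of_one_lt hQ).eventually_gt_atTop _
  refine (Filter.eventually_cofinite.mp hlarge).subset fun n ⟨s, hs, hle⟩ hlt => ?_
  rw [div_lt_iff₀ hm] at hlt
  have := mul_le_mul_of_nonneg_left (hS.min_le hne hs) (pow_pos (zero_lt_one.trans hQ) n).le
  linarith

theorem Set.IsWF.finite_pow_mul_le_of_neg {S : Set ℚ} (hS : S.IsWF) (hneg : ∀ s ∈ S, s < 0)
    {Q : ℚ} (hQ₀ : 0 < Q) (hQ₁ : Q < 1) {a : ℚ} (ha : a < 0) :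
    {n : ℕ | ∃ s ∈ S, Q ^ n * s ≤ a}.Finite := by
  rcases S.eq_empty_or_nonempty with rfl | hne
  · simp
  set m := hS.min hne
  have hm : m < 0 := hneg _ (hS.min_mem hne)
  have hsmall : ∀ᶠ n in Filter.cofinite, Q ^ n < a / m := by
    rw [Nat.cofinite_eq_atTop]
    exact (tendsto_pow_atTop_nhds_zero_of_lt_one hQ₀.le hQ₁).eventually
      (gt_mem_nhds (div_pos_of_neg_of_neg ha hm))
  refine (Filter.eventually_cofinite.mp hsmall).subset fun n ⟨s, hs, hle⟩ hlt => ?_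
  rw [lt_div_iff_of_neg hm] at hlt
  have := mul_le_mul_of_nonneg_left (hS.min_le hne hs) (pow_pos hQ₀ n).le
  linarith

theorem finsum_nat_eq_add_finsum_succ {M : Type*} [AddCommMonoid M] {f : ℕ → M}
    (hf : (support f).Finite) : ∑ᶠ n, f n = f 0 + ∑ᶠ n, f (n + 1) := by
  obtain ⟨N, hN⟩ := hf.bddAbove
  rw [finsum_eq_sum_of_support_subset f (s := Finset.range (N + 1)) fun n hn => by
      simpa [Nat.lt_succ_iff] using hN hn,
    finsum_eq_sum_of_support_subset (fun n => f (n + 1)) (s := Finset.range N) fun n hn => by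
      simpa using Nat.lt_of_succ_le (hN hn),
    Finset.sum_range_succ', add_comm]

namespace HahnSeries

variable {R F : Type*} [AddCommGroup R] [FunLike F R R] [AddMonoidHomClass F R R]

theorem support_iterate_subset {T : F} {Q : ℚ} {σ : HahnSeries ℚ R → HahnSeries ℚ R}
    (hσ : ∀ h a, (σ h).coeff a = T (h.coeff (a / Q))) (hQ : Q ≠ 0) (g : HahnSeries ℚ R) (n : ℕ) :
    (σ^[n] g).support ⊆ (Q ^ n * ·) '' g.support := by
  induction n with
  | zero => simp
  | succ n ih =>
    intro a ha
    have hcoeff : (σ^[n] g).coeff (a / Q) ≠ 0 := fun h0 => by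
      simp [iterate_succ_apply', hσ, h0] at ha
    obtain ⟨s, hs, hsa⟩ := ih hcoeff
    refine ⟨s, hs, ?_⟩
    simp only at hsa ⊢
    rw [pow_succ, mul_comm _ Q, mul_assoc, hsa, mul_div_cancel₀ a hQ]

theorem exists_sub_eq_of_finite_le {T : F} {Q : ℚ} {σ : HahnSeries ℚ R → HahnSeries ℚ R}
    (hσ : ∀ h a, (σ h).coeff a = T (h.coeff (a / Q))) (hQ : 0 < Q) (g : HahnSeries ℚ R)
    (hfin : ∀ a ∈ ⋃ n : ℕ, (Q ^ n * ·) '' g.support,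
      {n : ℕ | ∃ x ∈ (Q ^ n * ·) '' g.support, x ≤ a}.Finite) :
    ∃ h, h - σ h = g := by
  set t : ℕ → Set ℚ := fun n => (Q ^ n * ·) '' g.support
  have hsupp := support_iterate_subset hσ hQ.ne' g
  have hfin_mem : ∀ a, {n | a ∈ t n}.Finite := fun a => by
    by_cases ha : a ∈ ⋃ n, t n
    · exact (hfin a ha).subset fun n hn => ⟨a, hn, le_rfl⟩
    · simp only [Set.mem_iUnion, not_exists] at ha
      simp [ha]
  let N : SummableFamily ℚ R ℕ :=
    { toFun n := σ^[n] g
      isPWO_iUnion_support' := by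
        refine (Set.isWF_iUnion_of_finite_le (fun n => ?_) hfin).isPWO.mono
          (Set.iUnion_mono hsupp)
        exact (g.isPWO_support.image_of_monotone
          (monotone_mul_left_of_nonneg (pow_pos hQ n).le)).isWF
      finite_co_support' a := (hfin_mem a).subset fun n hn => hsupp n hn }
  refine ⟨N.hsum, HahnSeries.ext (funext fun a => ?_)⟩
  have hN : (Function.support fun n => (σ^[n] g).coeff (a / Q)).Finite :=
    (hfin_mem (a / Q)).subset fun n hn => hsupp n hn
  rw [coeff_sub, hσ, SummableFamily.coeff_hsum, SummableFamily.coeff_hsum]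
  change ∑ᶠ n, (σ^[n] g).coeff a - T (∑ᶠ n, (σ^[n] g).coeff (a / Q)) = g.coeff a
  rw [map_finsum T hN,
    finsum_nat_eq_add_finsum_succ ((hfin_mem a).subset fun n hn => hsupp n hn)]
  simp [iterate_succ_apply', hσ]

theorem exists_sub_eq_of_support_pos {T : F} {Q : ℚ} {σ : HahnSeries ℚ R → HahnSeries ℚ R}
    (hσ : ∀ h a, (σ h).coeff a = T (h.coeff (a / Q))) (hQ : 1 < Q) (g : HahnSeries ℚ R)
    (hg : ∀ a ∈ g.support, 0 < a) : ∃ h, h - σ h = g :=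
  exists_sub_eq_of_finite_le hσ (zero_lt_one.trans hQ) g fun a _ => by
    simpa using g.isWF_support.finite_pow_mul_le_of_pos hg hQ a

theorem exists_sub_eq_of_support_neg {T : R ≃+ R} {Q : ℚ}
    {σ : HahnSeries ℚ R ≃+ HahnSeries ℚ R} (hσ : ∀ h a, (σ h).coeff a = T (h.coeff (a / Q)))
    (hQ : 1 < Q) (g : HahnSeries ℚ R) (hg : ∀ a ∈ g.support, a < 0) : ∃ h, h - σ h = g := by
  have hQ₀ : 0 < Q := zero_lt_one.trans hQ
  have hσ_symm : ∀ h a, (σ.symm h).coeff a = T.symm (h.coeff (a / Q⁻¹)) := fun h a => by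
    rw [div_inv_eq_mul, T.eq_symm_apply]
    conv_rhs => rw [← σ.apply_symm_apply h, hσ, mul_div_cancel_right₀ a hQ₀.ne']
  obtain ⟨h, hh⟩ := exists_sub_eq_of_finite_le hσ_symm (inv_pos.mpr hQ₀) g fun a ha => by
    obtain ⟨n, s, hs, rfl⟩ : ∃ n : ℕ, ∃ s ∈ g.support, Q⁻¹ ^ n * s = a := by simpa using ha
    simpa using g.isWF_support.finite_pow_mul_le_of_neg hg (inv_pos.mpr hQ₀)
      (inv_lt_one_of_one_lt₀ hQ) (mul_neg_of_pos_of_neg (pow_pos (inv_pos.mpr hQ₀) n) (hg s hs))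
  refine ⟨-σ.symm h, ?_⟩
  rw [map_neg, σ.apply_symm_apply, ← hh]
  abel

theorem exists_sub_eq {T : R ≃+ R} {Q : ℚ} {σ : HahnSeries ℚ R ≃+ HahnSeries ℚ R}
    (hσ : ∀ h a, (σ h).coeff a = T (h.coeff (a / Q))) (hQ : 1 < Q)
    (hT : ∀ c, ∃ x, x - T x = c) (g : HahnSeries ℚ R) : ∃ h, h - σ h = g := by
  obtain ⟨u, hu⟩ := exists_sub_eq_of_support_neg hσ hQ (truncLT 0 g) fun a ha => by
    rw [support_truncLT] at ha
    exact ha.2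
  obtain ⟨x, hx⟩ := hT (g.coeff 0)
  obtain ⟨v, hv⟩ := exists_sub_eq_of_support_pos hσ hQ
    (g - truncLT 0 g - single 0 (g.coeff 0)) fun a ha => by
      contrapose! ha
      rcases ha.lt_or_eq with ha | rfl
      · simp [ha, ha.ne]
      · simp
  have hσx : σ (single 0 x) = single 0 (T x) := by
    ext a
    rcases eq_or_ne a 0 with rfl | ha
    · simp [hσ]
    · simp [hσ, ha, (zero_lt_one.trans hQ).ne']
  refine ⟨u + single 0 x + v, ?_⟩
  calc u + single 0 x + v - σ (u + single 0 x + v)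
      = (u - σ u) + single 0 (x - T x) + (v - σ v) := by
        rw [map_add, map_add, hσx, single_sub]; abel
    _ = g := by rw [hu, hx, hv]; abel

end HahnSeries

theorem exists_sub_apply_eq_of_sum_iterate {R : Type*} [CommRing R] (T : R →+* R) {n : ℕ}
    {c α : R} (hc : ∑ j ∈ range n, T^[j] c = 0) (hα : ∑ j ∈ range n, T^[j] α = 1)
    (hαn : T^[n] α = α) : ∃ y, y - T y = c := by
  -- the witness is y = ∑_{k<n} (c + T c + ⋯ + T^{k-1} c) T^k α
  set s : ℕ → R := fun k => ∑ i ∈ range k, T^[i] c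
  have hs : ∀ k, T (s k) = s (k + 1) - c := fun k => by
    simp [s, map_sum, sum_range_succ', ← iterate_succ_apply' T]
  have hα_succ : ∑ k ∈ range n, T^[k + 1] α = 1 := by
    have := sum_range_sub (fun k => T^[k] α) n
    rwa [sum_sub_distrib, hα, hαn, iterate_zero_apply, sub_self, sub_eq_zero] at this
  have htel := sum_range_sub (fun k => s k * T^[k] α) n
  have hs₀ : s 0 = 0 := sum_range_zero _
  refine ⟨∑ k ∈ range n, s k * T^[k] α, ?_⟩
  simp only [map_sum, map_mul, hs, ← iterate_succ_apply' T, sub_mul, sum_sub_distrib,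
    ← mul_sum, hα_succ] at htel ⊢
  rw [show s n = 0 from hc, hs₀] at htel
  linear_combination -htel

theorem Function.Semiconj₂.isPeriodicPt {α : Type*} {f : α → α} {op : α → α → α}
    (hf : Semiconj₂ f op op) {m n : ℕ} {x y : α} (hx : IsPeriodicPt f m x)
    (hy : IsPeriodicPt f n y) : IsPeriodicPt f (m * n) (op x y) := by
  rw [IsPeriodicPt, IsFixedPt, hf.iterate, (hx.mul_const n).eq, (hy.const_mul m).eq]

theorem Function.Semiconj₂.mem_periodicPts {α : Type*} {f : α → α} {op : α → α → α}
    (hf : Semiconj₂ f op op) {x y : α} (hx : x ∈ periodicPts f) (hy : y ∈ periodicPts f) :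
    op x y ∈ periodicPts f := by
  obtain ⟨m, hm, hx⟩ := hx
  obtain ⟨n, hn, hy⟩ := hy
  exact mk_mem_periodicPts (Nat.mul_pos hm hn) (hf.isPeriodicPt hx hy)

theorem Function.IsPeriodicPt.sum_range_mul {M : Type*} [AddCommMonoid M] {f : M → M} {n : ℕ}
    {x : M} (hx : IsPeriodicPt f n x) (k : ℕ) :
    ∑ j ∈ range (k * n), f^[j] x = k • ∑ j ∈ range n, f^[j] x := by
  induction k with
  | zero => simp
  | succ k ih =>
    rw [Nat.succ_mul, sum_range_add, ih, succ_nsmul]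
    simp_rw [add_comm (k * n), iterate_add_apply, (hx.const_mul k).eq]

theorem exists_pow_prime_pow_eq_self (p : ℕ) [Fact p.Prime] {K : Type*} [Field K]
    [Algebra (ZMod p) K] {x : K} (hx : IsIntegral (ZMod p) x) : ∃ m, 0 < m ∧ x ^ p ^ m = x := by
  let F := IntermediateField.adjoin (ZMod p) {x}
  have : FiniteDimensional (ZMod p) F := IntermediateField.adjoin.finiteDimensional hx
  have : Finite F := Module.finite_of_finite (ZMod p)
  let : Fintype F := Fintype.ofFinite F
  have : CharP F p := charP_of_injective_algebraMap (algebraMap (ZMod p) F).injective p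
  obtain ⟨m, -, hcard⟩ := FiniteField.card F p
  refine ⟨m, m.pos, ?_⟩
  have := congrArg (algebraMap F K)
    (FiniteField.pow_card (⟨x, IntermediateField.mem_adjoin_simple_self (ZMod p) x⟩ : F))
  rwa [hcard, map_pow] at this

theorem exists_sum_iterate_iterateFrobenius_eq_one (p : ℕ) [Fact p.Prime] {K : Type*} [Field K]
    [IsAlgClosed K] [CharP K p] {e n : ℕ} (he : e ≠ 0) (hn : n ≠ 0) :
    ∃ α : K, ∑ j ∈ range n, (iterateFrobenius K p e)^[j] α = 1 ∧
      (iterateFrobenius K p e)^[n] α = α := by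
  set F := iterateFrobenius K p e
  have hF : ∀ j (α : K), F^[j] α = α ^ (p ^ e) ^ j := fun j α => by
    rw [← iterateFrobenius_mul_apply, iterateFrobenius_def, pow_mul]
  have hq : 2 ≤ p ^ e := (Fact.out : p.Prime).two_le.trans (Nat.le_self_pow he p)
  set P : Polynomial K := ∑ j ∈ range n, Polynomial.X ^ (p ^ e) ^ j - 1
  have hcoeff : P.coeff ((p ^ e) ^ (n - 1)) = 1 := by
    simp [P, Polynomial.coeff_X_pow, Polynomial.coeff_one, (Nat.pow_right_injective hq).eq_iff,
      Nat.pos_of_ne_zero hn, eq_comm (a := n - 1), (Fact.out : p.Prime).ne_zero]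
  have hdeg : P.degree ≠ 0 := fun h0 => by
    rw [Polynomial.eq_C_of_degree_eq_zero h0, Polynomial.coeff_C,
      if_neg (pow_ne_zero _ (by omega))] at hcoeff
    exact zero_ne_one hcoeff
  obtain ⟨α, hα⟩ := IsAlgClosed.exists_root P hdeg
  have hsum : ∑ j ∈ range n, F^[j] α = 1 := by
    simpa [P, Polynomial.eval_finsetSum, hF, sub_eq_zero] using hα
  refine ⟨α, hsum, ?_⟩
  have htel := sum_range_sub (fun j => F^[j] α) n
  simp only [iterate_succ_apply', ← map_sum F, hsum, map_one, sum_sub_distrib, sub_self,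
    iterate_zero_apply] at htel
  exact (sub_eq_zero.mp htel.symm)

theorem phi_algebraMap (p : ℕ) [Fact p.Prime] (s : ℕ) (P : MvPolynomial (Fin s) (Fac p)) :
    phi p s (algebraMap _ (Ls p s) P)
      = algebraMap _ (Ls p s) (MvPolynomial.map (frobenius (Fac p) p) P) :=
  IsFractionRing.ringEquivOfRingEquiv_algebraMap _ P

theorem phi_iota (p : ℕ) [Fact p.Prime] (s : ℕ) (α : Fac p) :
    phi p s (iota p s α) = iota p s (frobenius (Fac p) p α) := by
  simp only [iota, RingHom.comp_apply, phi_algebraMap, MvPolynomial.map_C]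

theorem MvPolynomial.mem_periodicPts_map {σ K : Type*} [CommSemiring K] {f : K →+* K}
    (hf : ∀ a, a ∈ periodicPts f) (P : MvPolynomial σ K) : P ∈ periodicPts (map f) := by
  induction P using MvPolynomial.induction_on with
  | C a =>
    obtain ⟨m, hm, ha⟩ := hf a
    exact mk_mem_periodicPts hm (ha.map fun b => (map_C f b).symm)
  | add P R hP hR => exact Semiconj₂.mem_periodicPts (map_add (map f)) hP hR
  | mul_X P i hP =>
    exact Semiconj₂.mem_periodicPts (map_mul (map f)) hP (mk_mem_periodicPts one_pos (map_X f i))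

theorem mem_periodicPts_frobenius (p : ℕ) [Fact p.Prime] (a : Fac p) :
    a ∈ periodicPts (frobenius (Fac p) p) := by
  obtain ⟨m, hm, ha⟩ := exists_pow_prime_pow_eq_self p (Algebra.IsIntegral.isIntegral a)
  exact mk_mem_periodicPts hm (by rwa [IsPeriodicPt, IsFixedPt, iterate_frobenius])

theorem phi_pow_iota (p : ℕ) [Fact p.Prime] (s e : ℕ) (α : Fac p) :
    (phi p s ^ e) (iota p s α) = iota p s (α ^ p ^ e) := by
  rw [RingAut.coe_pow, ← iterate_frobenius]
  exact ((Semiconj.iterate_right (fun α => (phi_iota p s α).symm) e).eq α).symm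

theorem mem_periodicPts_phi (p : ℕ) [Fact p.Prime] (s : ℕ) (c : Ls p s) :
    c ∈ periodicPts (phi p s) := by
  have hpoly := MvPolynomial.mem_periodicPts_map (σ := Fin s) (mem_periodicPts_frobenius p)
  have halg : ∀ P, algebraMap _ (Ls p s) P ∈ periodicPts (phi p s) := fun P => by
    obtain ⟨m, hm, hP⟩ := hpoly P
    exact mk_mem_periodicPts hm (hP.map fun Q => (phi_algebraMap p s Q).symm)
  obtain ⟨P, R, -, rfl⟩ := IsFractionRing.div_surjective (A := MvPolynomial (Fin s) (Fac p)) c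
  exact Semiconj₂.mem_periodicPts (map_div₀ (phi p s)) (halg P) (halg R)

instance (p : ℕ) [Fact p.Prime] (s : ℕ) : CharP (Ls p s) p :=
  charP_of_injective_ringHom (iota p s).injective p

theorem exists_sub_phi_pow_eq (p : ℕ) [Fact p.Prime] (s e : ℕ) (he : e ≠ 0)
    (c : Ls p s) : ∃ y, y - (phi p s ^ e) y = c := by
  set T := phi p s ^ e
  obtain ⟨n, hn, hc⟩ := mem_periodicPts_phi p s c
  have htrace : ∑ j ∈ range (p * n), T^[j] c = 0 := by
    rw [RingAut.coe_pow, (hc.iterate e).sum_range_mul, nsmul_eq_mul, CharP.cast_eq_zero,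
      zero_mul]
  obtain ⟨α, hα, hαn⟩ := exists_sum_iterate_iterateFrobenius_eq_one p (K := Fac p) he
    (Nat.mul_ne_zero (Fact.out : p.Prime).ne_zero hn.ne')
  have hsemi : Semiconj (iota p s) (iterateFrobenius (Fac p) p e) T :=
    fun α => (phi_pow_iota p s e α).symm
  refine exists_sub_apply_eq_of_sum_iterate T.toRingHom htrace (α := iota p s α) ?_ ?_
  · rw [← map_one (iota p s), ← hα, map_sum]
    exact sum_congr rfl fun j _ => ((hsemi.iterate_right j).eq α).symm
  · exact ((hsemi.iterate_right _).eq α).symm.trans (congrArg _ hαn)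

theorem mu_coeff (p : ℕ) [Fact p.Prime] (s : ℕ) (x : Ks p s) (a : ℚ) :
    (mu p s x).coeff a = phi p s (x.coeff (a / p)) := by
  have hp : (0 : ℚ) < p := by exact_mod_cast (Fact.out : p.Prime).pos
  change ((scaleHom (p : ℚ) hp) ((coeffRingHom (phi p s).toRingHom) x)).coeff a = _
  rw [← mul_div_cancel₀ a hp.ne', scale_coeff, coeffRingHom_coeff, mul_div_cancel₀ a hp.ne']
  rfl

theorem tau_coeff (p : ℕ) [Fact p.Prime] (e s : ℕ) (x : Ks p s) (a : ℚ) :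
    (tau p e s x).coeff a = (phi p s ^ e) (x.coeff (a / (p : ℚ) ^ e)) := by
  induction e generalizing a with
  | zero => simp [tau]
  | succ e ih =>
    rw [tau, pow_succ', RingAut.mul_apply, mu_coeff, ← tau, ih, pow_succ' (phi p s),
      RingAut.mul_apply, div_div, pow_succ']

theorem tau_single (p : ℕ) [Fact p.Prime] (e s : ℕ) (b : ℚ) (c : Ls p s) :
    tau p e s (HahnSeries.single b c) = HahnSeries.single ((p : ℚ) ^ e * b) ((phi p s ^ e) c) := by
  have hq : (p : ℚ) ^ e ≠ 0 := pow_ne_zero _ (by exact_mod_cast (Fact.out : p.Prime).ne_zero)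
  ext a
  rw [tau_coeff, HahnSeries.coeff_single, HahnSeries.coeff_single, div_eq_iff hq, mul_comm b]
  split_ifs <;> simp

theorem exists_sub_tau_eq (p : ℕ) [Fact p.Prime] (e s : ℕ) (he : e ≠ 0) (g : Ks p s) :
    ∃ h, h - tau p e s h = g :=
  HahnSeries.exists_sub_eq (T := (phi p s ^ e).toAddEquiv) (σ := (tau p e s).toAddEquiv)
    (tau_coeff p e s) (one_lt_pow₀ (by exact_mod_cast (Fact.out : p.Prime).one_lt) he)
    (exists_sub_phi_pow_eq p s e he) g

theorem exists_tau_eq_neg_theta_mul (p : ℕ) [Fact p.Prime] (e s : ℕ) (he : e ≠ 0) :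
    ∃ ξ : Ks p s, ξ ≠ 0 ∧ tau p e s ξ = -(theta p s * ξ) := by
  have hq : 1 < p ^ e := Nat.one_lt_pow he (Fact.out : p.Prime).one_lt
  obtain ⟨ζ, hζ⟩ := IsAlgClosed.exists_pow_nat_eq (-1 : Fac p) (n := p ^ e - 1) (by omega)
  have hζ0 : ζ ≠ 0 := by
    rintro rfl
    rw [zero_pow (by omega)] at hζ
    exact one_ne_zero (neg_eq_zero.mp hζ.symm)
  have hζq : ζ ^ p ^ e = -ζ := by
    rw [← Nat.sub_add_cancel hq.le, pow_succ, hζ, neg_one_mul]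
  have hQ : ((p : ℚ) ^ e - 1) ≠ 0 := by
    rw [sub_ne_zero]; exact_mod_cast hq.ne'
  have hb : (p : ℚ) ^ e * -((p : ℚ) ^ e - 1)⁻¹ = -1 + -((p : ℚ) ^ e - 1)⁻¹ := by
    field_simp
    ring
  refine ⟨HahnSeries.single (-((p : ℚ) ^ e - 1)⁻¹) (iota p s ζ),
    HahnSeries.single_ne_zero ((map_ne_zero _).mpr hζ0), ?_⟩
  rw [tau_single, phi_pow_iota, hζq, map_neg, theta, HahnSeries.single_mul_single, one_mul,
    ← HahnSeries.single_neg, hb]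

/-- The Carlitz operator C_θ : f ↦ θf + τ(f) is surjective on 𝕂_s, i.e. the Carlitz
module C(𝕂_s) is θ-divisible. -/
theorem carlitz_module_theta_divisible (p : ℕ) [Fact p.Prime] (e s : ℕ) (he : 1 ≤ e)
    (g : Ks p s) : ∃ f : Ks p s, theta p s * f + tau p e s f = g := by
  obtain ⟨ξ, hξ, hτξ⟩ := exists_tau_eq_neg_theta_mul p e s (by omega)
  have hθξ : theta p s * ξ ≠ 0 := mul_ne_zero (HahnSeries.single_ne_zero one_ne_zero) hξ
  obtain ⟨h, hh⟩ := exists_sub_tau_eq p e s (by omega) ((theta p s * ξ)⁻¹ * g)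
  refine ⟨ξ * h, ?_⟩
  calc theta p s * (ξ * h) + tau p e s (ξ * h) = theta p s * ξ * (h - tau p e s h) := by
        rw [map_mul, hτξ]; ring
    _ = g := by rw [hh, mul_inv_cancel_left₀ hθξ]
end
end

section
/- Let R be a field and p a prime number. Consider the polynomial ring R[X₀, X₁, X₂, …] in countably many indeterminates and the R-algebra homomorphism φ to the polynomial ring R[Z] determined by φ(X_k) = Z^{p^k} for all k ∈ ℕ. Then: (i) φ is surjective; (ii) the kernel of φ is the ideal 𝒫 generated by the elements X₀^{p^k} − X_k for k ∈ ℕ, so 𝒫 is a prime ideal and R[X₀,X₁,…]/𝒫 is isomorphic as an R-algebra to R[Z]; (iii) the residue classes modulo 𝒫 of the 'tame' monomials ∏_{j=0}^{r} X_j^{i_j} with r ∈ ℕ and 0 ≤ i_j ≤ p−1 for all j form an R-basis of the quotient R[X₀,X₁,…]/𝒫, the tame monomial with exponents (i₀,…,i_r) being mapped by φ to Z^{i₀+i₁p+⋯+i_r p^r}. -/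
noncomputable section

/-- The R-algebra homomorphism R[X₀,X₁,…] → R[Z] sending X_k to Z^(p^k). -/
def phiHom (R : Type*) [CommRing R] (p : ℕ) :
    MvPolynomial ℕ R →ₐ[R] Polynomial R :=
  MvPolynomial.aeval fun k => Polynomial.X ^ p ^ k

/-- The ideal 𝒫 generated by the elements X₀^(p^k) − X_k, k ∈ ℕ. -/
def Pideal (R : Type*) [CommRing R] (p : ℕ) : Ideal (MvPolynomial ℕ R) :=
  Ideal.span (Set.range fun k : ℕ => (MvPolynomial.X 0 : MvPolynomial ℕ R) ^ p ^ k
    - MvPolynomial.X k)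

/-- The family of residue classes of tame monomials in R[X₀,X₁,…]/𝒫. -/
def tameMonomialClass (R : Type*) [CommRing R] (p : ℕ)
    (v : {v : ℕ →₀ ℕ // ∀ j, v j < p}) : MvPolynomial ℕ R ⧸ Pideal R p :=
  Ideal.Quotient.mk (Pideal R p) (MvPolynomial.monomial v.1 (1 : R))

/-- Uniqueness of base-p digits, finite version. -/
lemma digits_inj_aux {p : ℕ} (hp : 1 ≤ p) : ∀ (N : ℕ) (a b : ℕ → ℕ),
    (∀ j, a j < p) → (∀ j, b j < p) →
    (∑ j ∈ Finset.range N, a j * p ^ j) = (∑ j ∈ Finset.range N, b j * p ^ j) →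
    ∀ j < N, a j = b j := by
  intro N
  induction N with
  | zero => intro a b _ _ _ j hj; omega
  | succ N ih =>
    intro a b ha hb hsum j hj
    have key : ∀ c : ℕ → ℕ, (∑ j ∈ Finset.range (N+1), c j * p ^ j)
        = (∑ j ∈ Finset.range N, c (j+1) * p ^ j) * p + c 0 := by
      intro c
      rw [Finset.sum_range_succ']
      simp only [pow_zero, mul_one, Finset.sum_mul]
      congr 1
      apply Finset.sum_congr rfl
      intro i _
      ring
    rw [key a, key b] at hsum
    have h0 : a 0 = b 0 := by
      have h1 : ((∑ j ∈ Finset.range N, a (j+1) * p ^ j) * p + a 0) % p = a 0 := by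
        rw [Nat.add_comm, Nat.add_mul_mod_self_right, Nat.mod_eq_of_lt (ha 0)]
      have h2 : ((∑ j ∈ Finset.range N, b (j+1) * p ^ j) * p + b 0) % p = b 0 := by
        rw [Nat.add_comm, Nat.add_mul_mod_self_right, Nat.mod_eq_of_lt (hb 0)]
      rw [hsum] at h1
      omega
    have htail : (∑ j ∈ Finset.range N, a (j+1) * p ^ j)
        = (∑ j ∈ Finset.range N, b (j+1) * p ^ j) := by
      rw [h0] at hsum
      have hp0 : 0 < p := hp
      exact Nat.eq_of_mul_eq_mul_right hp0 (by omega)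
    rcases j with _ | j
    · exact h0
    · exact ih (fun k => a (k+1)) (fun k => b (k+1)) (fun k => ha (k+1))
        (fun k => hb (k+1)) htail j (by omega)

/-- Existence of base-p digit expansions. -/
lemma digits_surj {p : ℕ} (hp : 2 ≤ p) (n : ℕ) :
    ∃ v : ℕ →₀ ℕ, (∀ j, v j < p) ∧ v.sum (fun j i => i * p ^ j) = n := by
  induction n using Nat.strong_induction_on with
  | _ n ih =>
    rcases Nat.eq_zero_or_pos n with hn | hn
    · exact ⟨0, fun j => by simp; omega, by simp [hn]⟩
    · obtain ⟨v', hv', hsum'⟩ := ih (n / p) (Nat.div_lt_self hn (by omega))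
      refine ⟨Finsupp.single 0 (n % p) + Finsupp.mapDomain Nat.succ v', ?_, ?_⟩
      · intro j
        rcases j with _ | j
        · have : Finsupp.mapDomain Nat.succ v' 0 = 0 :=
            Finsupp.mapDomain_notin_range _ _ (by simp)
          simp [this, Nat.mod_lt n (show 0 < p by omega)]
        · have : Finsupp.mapDomain Nat.succ v' (j+1) = v' j :=
            Finsupp.mapDomain_apply Nat.succ_injective v' j
          simp [this, hv' j]
      · rw [Finsupp.sum_add_index' (by simp) (fun a b c => by ring)]
        rw [Finsupp.sum_single_index (by simp)]
        rw [Finsupp.sum_mapDomain_index_inj Nat.succ_injective]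
        have h3 : (v'.sum fun a b => b * p ^ Nat.succ a) = (n / p) * p := by
          rw [← hsum', Finsupp.sum_mul]
          apply Finsupp.sum_congr
          intro a _
          rw [pow_succ]
          ring
        rw [h3, pow_zero, mul_one]
        have h4 := Nat.mod_add_div' n p
        omega

/-- (i) φ is surjective; (ii) ker φ = 𝒫, 𝒫 is prime and R[X₀,X₁,…]/𝒫 ≅ R[Z] as
R-algebras; (iii) the residue classes of the tame monomials (those in which every
variable appears with exponent ≤ p−1) form an R-basis of the quotient, the tame
monomial with exponents (i₀,…,i_r) being sent by φ to Z^(i₀+i₁p+⋯+i_r p^r). -/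
theorem tame_monomials_basis (R : Type*) [Field R] (p : ℕ) (hp : p.Prime) :
    Function.Surjective (phiHom R p) ∧
      RingHom.ker (phiHom R p : MvPolynomial ℕ R →+* Polynomial R) = Pideal R p ∧
      (Pideal R p).IsPrime ∧
      Nonempty ((MvPolynomial ℕ R ⧸ Pideal R p) ≃ₐ[R] Polynomial R) ∧
      (∀ v : ℕ →₀ ℕ, (∀ j, v j < p) →
        phiHom R p (MvPolynomial.monomial v (1 : R))
          = Polynomial.X ^ (v.sum fun j i => i * p ^ j)) ∧
      LinearIndependent R (tameMonomialClass R p) ∧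
      Submodule.span R (Set.range (tameMonomialClass R p)) = ⊤ := by
  have hp2 : 2 ≤ p := hp.two_le
  -- (i) surjectivity
  have hsurj : Function.Surjective (phiHom R p) := by
    intro f
    refine ⟨Polynomial.aeval (MvPolynomial.X 0 : MvPolynomial ℕ R) f, ?_⟩
    rw [show phiHom R p (Polynomial.aeval (MvPolynomial.X 0 : MvPolynomial ℕ R) f)
        = ((phiHom R p).comp (Polynomial.aeval (MvPolynomial.X 0))) f from rfl]
    have : (phiHom R p).comp (Polynomial.aeval (MvPolynomial.X 0 : MvPolynomial ℕ R))
        = AlgHom.id R (Polynomial R) := by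
      apply Polynomial.algHom_ext
      simp [phiHom]
    rw [this]; rfl
  -- the "straightening" map σ : X_k ↦ X₀^(p^k)
  set σ : MvPolynomial ℕ R →ₐ[R] MvPolynomial ℕ R :=
    MvPolynomial.aeval fun k => (MvPolynomial.X 0 : MvPolynomial ℕ R) ^ p ^ k with hσ
  have hσφ : σ = (Polynomial.aeval (MvPolynomial.X 0 : MvPolynomial ℕ R)).comp (phiHom R p) := by
    apply MvPolynomial.algHom_ext
    intro k
    simp [hσ, phiHom]
  have hmkσ : (Ideal.Quotient.mkₐ R (Pideal R p)).comp σ = Ideal.Quotient.mkₐ R (Pideal R p) := by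
    apply MvPolynomial.algHom_ext
    intro k
    simp only [AlgHom.comp_apply, hσ, MvPolynomial.aeval_X, Ideal.Quotient.mkₐ_eq_mk]
    rw [Ideal.Quotient.mk_eq_mk_iff_sub_mem]
    exact Ideal.subset_span ⟨k, rfl⟩
  -- (ii) kernel
  have hker : RingHom.ker (phiHom R p : MvPolynomial ℕ R →+* Polynomial R) = Pideal R p := by
    apply le_antisymm
    · intro f hf
      have hf0 : phiHom R p f = 0 := hf
      have h1 : Ideal.Quotient.mk (Pideal R p) (σ f) = Ideal.Quotient.mk (Pideal R p) f := by
        have := congrArg (fun g => g f) hmkσ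
        simpa using this
      have h2 : σ f = 0 := by
        rw [hσφ]
        simp [AlgHom.comp_apply, hf0]
      rw [h2, map_zero] at h1
      rwa [eq_comm, Ideal.Quotient.eq_zero_iff_mem] at h1
    · rw [Pideal, Ideal.span_le]
      rintro _ ⟨k, rfl⟩
      simp only [SetLike.mem_coe, RingHom.mem_ker, map_sub]
      simp [phiHom, ← pow_mul]
  -- prime
  have hprime : (Pideal R p).IsPrime := by
    rw [← hker]
    exact RingHom.ker_isPrime _
  -- the algebra equivalence
  let e : (MvPolynomial ℕ R ⧸ Pideal R p) ≃ₐ[R] Polynomial R :=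
    (Ideal.quotientEquivAlgOfEq R hker.symm).trans (Ideal.quotientKerAlgEquivOfSurjective hsurj)
  have he : ∀ f : MvPolynomial ℕ R, e (Ideal.Quotient.mk (Pideal R p) f) = phiHom R p f := by
    intro f
    show (Ideal.quotientKerAlgEquivOfSurjective hsurj)
      ((Ideal.quotientEquivAlgOfEq R hker.symm) (Ideal.Quotient.mk (Pideal R p) f)) = _
    rw [Ideal.quotientEquivAlgOfEq_mk]
    rfl
  -- (iii) image of monomials
  have hmono : ∀ v : ℕ →₀ ℕ,
      phiHom R p (MvPolynomial.monomial v (1 : R))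
        = Polynomial.X ^ (v.sum fun j i => i * p ^ j) := by
    intro v
    rw [phiHom, MvPolynomial.aeval_monomial, map_one, one_mul]
    rw [show (v.prod fun i k => (Polynomial.X ^ p ^ i : Polynomial R) ^ k)
        = v.prod fun i k => (Polynomial.X : Polynomial R) ^ (k * p ^ i) by
      apply Finsupp.prod_congr; intro a _; rw [← pow_mul, mul_comm]]
    rw [Finsupp.prod, Finsupp.sum, Finset.prod_pow_eq_pow_sum]
  -- injectivity of the digit-sum map
  have ninj : Function.Injective
      (fun v : {v : ℕ →₀ ℕ // ∀ j, v j < p} => v.1.sum fun j i => i * p ^ j) := by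
    rintro ⟨v, hv⟩ ⟨w, hw⟩ h
    simp only at h
    obtain ⟨N, hN⟩ := Finset.exists_nat_subset_range (v.support ∪ w.support)
    have hvN : v.support ⊆ Finset.range N := fun x hx => hN (Finset.mem_union_left _ hx)
    have hwN : w.support ⊆ Finset.range N := fun x hx => hN (Finset.mem_union_right _ hx)
    have hvs : (v.sum fun j i => i * p ^ j) = ∑ j ∈ Finset.range N, v j * p ^ j :=
      Finsupp.sum_of_support_subset v hvN _ (fun i _ => by simp)
    have hws : (w.sum fun j i => i * p ^ j) = ∑ j ∈ Finset.range N, w j * p ^ j :=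
      Finsupp.sum_of_support_subset w hwN _ (fun i _ => by simp)
    rw [hvs, hws] at h
    refine Subtype.ext (Finsupp.ext fun j => ?_)
    by_cases hj : j < N
    · exact digits_inj_aux (by omega) N v w hv hw h j hj
    · have h1 : v j = 0 := by
        by_contra hc
        exact hj (Finset.mem_range.mp (hvN (Finsupp.mem_support_iff.mpr hc)))
      have h2 : w j = 0 := by
        by_contra hc
        exact hj (Finset.mem_range.mp (hwN (Finsupp.mem_support_iff.mpr hc)))
      rw [h1, h2]
  -- relate tameMonomialClass to powers of X through e
  have hcomp : ∀ v : {v : ℕ →₀ ℕ // ∀ j, v j < p},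
      e (tameMonomialClass R p v) = Polynomial.X ^ (v.1.sum fun j i => i * p ^ j) := by
    intro v
    rw [tameMonomialClass, he, hmono]
  -- linear independence of powers of X
  have hXli : LinearIndependent R (fun n : ℕ => (Polynomial.X : Polynomial R) ^ n) := by
    have := (Polynomial.basisMonomials R).linearIndependent
    rw [Polynomial.coe_basisMonomials] at this
    simpa [Polynomial.X_pow_eq_monomial] using this
  -- linear independence
  have hli : LinearIndependent R (tameMonomialClass R p) := by
    have h1 : LinearIndependent R
        (fun v : {v : ℕ →₀ ℕ // ∀ j, v j < p} =>
          (Polynomial.X : Polynomial R) ^ (v.1.sum fun j i => i * p ^ j)) :=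
      hXli.comp _ ninj
    have h2 := h1.map' e.symm.toLinearMap (LinearMap.ker_eq_bot.mpr e.symm.injective)
    have h3 : (⇑e.symm.toLinearMap ∘ fun v : {v : ℕ →₀ ℕ // ∀ j, v j < p} =>
        (Polynomial.X : Polynomial R) ^ (v.1.sum fun j i => i * p ^ j))
        = tameMonomialClass R p := by
      funext v
      simp only [Function.comp_apply, AlgEquiv.toLinearMap_apply]
      rw [← hcomp v, AlgEquiv.symm_apply_apply]
    rwa [h3] at h2
  -- spanning
  have hspan : Submodule.span R (Set.range (tameMonomialClass R p)) = ⊤ := by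
    have hrange : Set.range (tameMonomialClass R p)
        = ⇑e.symm '' Set.range (fun n : ℕ => (Polynomial.X : Polynomial R) ^ n) := by
      ext x
      constructor
      · rintro ⟨v, rfl⟩
        exact ⟨Polynomial.X ^ (v.1.sum fun j i => i * p ^ j), ⟨_, rfl⟩,
          by rw [← hcomp v, AlgEquiv.symm_apply_apply]⟩
      · rintro ⟨_, ⟨n, rfl⟩, rfl⟩
        obtain ⟨v, hv, hsum⟩ := digits_surj hp2 n
        refine ⟨⟨v, hv⟩, e.injective ?_⟩
        rw [AlgEquiv.apply_symm_apply, hcomp ⟨v, hv⟩]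
        exact congrArg _ hsum
    rw [hrange, show ⇑e.symm = ⇑e.symm.toLinearMap from rfl, ← Submodule.map_span]
    have hXspan : Submodule.span R (Set.range (fun n : ℕ => (Polynomial.X : Polynomial R) ^ n))
        = ⊤ := by
      have := (Polynomial.basisMonomials R).span_eq
      rw [Polynomial.coe_basisMonomials] at this
      simpa [Polynomial.X_pow_eq_monomial] using this
    rw [hXspan, Submodule.map_top, LinearMap.range_eq_top]
    exact e.symm.surjective
  exact ⟨hsurj, hker, hprime, ⟨e⟩, fun v _ => hmono v, hli, hspan⟩
end
end
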